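/- Let Q be a countable linear order with no least and no greatest element, let I be a nonempty set, and let c : Q → I be a coloring such that for all q < q' in Q and every i ∈ I there exists r with q < r < q' and c r = i. Let (Y i)_{i ∈ I} be a family of linear orders and Z a linear order such that Z and all the Y i are pairwise lower isomorphic (including each lower isomorphic to itself). Then the linear order (Σₗ (q : Q), Y (c q)) ⊕ₗ Z — the lexicographic sum of the fibers Y (c q) over Q, followed by a copy of Z — is lower 1-transitive. -/

import Mathlib

/-!
Write `M = (Σₗ q : Q, Y (c q)) ⊕ₗ Z`. The initial segment of `M` at a point `⟨q, y⟩` of the sum is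
`(Σₗ s : Iio q, Y (c s)) ⊕ₗ Iic y`, and the one at a point `z` of `Z` is `(Σₗ q : Q, Y (c q)) ⊕ₗ Iic z`.
Each `Iio q`, with the restricted colouring, is again a countable densely coloured order without
endpoints, so a coloured version of Cantor's back-and-forth argument identifies all these index
orders colour-preservingly, hence all the lexicographic sums over them. The remaining summands
`Iic y`, `Iic z` are identified by the lower isomorphisms between the `Y i` and `Z`.
-/

/-- A linear order is lower 1-transitive if any two of its initial segments
are order-isomorphic. -/
def LowerOneTransitive (X : Type*) [LinearOrder X] : Prop :=
  ∀ a b : X, Nonempty (Set.Iic a ≃o Set.Iic b)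

/-- Two linear orders are lower isomorphic if any two initial segments
(one from each) are order-isomorphic. -/
def LowerIsomorphic (X Y : Type*) [LinearOrder X] [LinearOrder Y] : Prop :=
  ∀ (a : X) (b : Y), Nonempty (Set.Iic a ≃o Set.Iic b)

open Set

section DenselyColored

variable {I α : Type*} [LinearOrder α]

def DenselyColored (c : α → I) : Prop :=
  ∀ a b, a < b → ∀ i, ∃ r, a < r ∧ r < b ∧ c r = i

namespace DenselyColored

variable {c : α → I}

theorem denselyOrdered [Nonempty I] (hc : DenselyColored c) : DenselyOrdered α where
  dense a b hab :=
    let ⟨r, har, hrb, _⟩ := hc a b hab (Classical.arbitrary I)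
    ⟨r, har, hrb⟩

protected theorem Iio (hc : DenselyColored c) (a : α) : DenselyColored fun x : Iio a => c x :=
  fun x y hxy i =>
    let ⟨r, hxr, hry, hr⟩ := hc x y hxy i
    ⟨⟨r, hry.trans y.2⟩, hxr, hry, hr⟩

theorem exists_between_finsets [NoMinOrder α] [NoMaxOrder α] [Nonempty α]
    (hc : DenselyColored c) (lo hi : Finset α) (lo_lt_hi : ∀ x ∈ lo, ∀ y ∈ hi, x < y) (i : I) :
    ∃ m, (∀ x ∈ lo, x < m) ∧ (∀ y ∈ hi, m < y) ∧ c m = i := by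
  have : Nonempty I := ⟨i⟩
  have := hc.denselyOrdered
  -- colour density needs an interval to work in; `(m', m)` is one inside the gap
  obtain ⟨m, hlo_m, hm_hi⟩ := Order.exists_between_finsets lo hi lo_lt_hi
  obtain ⟨m', hlo_m', hm'm⟩ := Order.exists_between_finsets lo {m} fun x hx y hy =>
    (Finset.mem_singleton.1 hy).symm ▸ hlo_m x hx
  obtain ⟨r, hm'r, hrm, hr⟩ := hc m' m (hm'm m (Finset.mem_singleton_self m)) i
  exact ⟨r, fun x hx => (hlo_m' x hx).trans hm'r, fun y hy => hrm.trans (hm_hi y hy), hr⟩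

end DenselyColored

end DenselyColored

instance Set.Iio.noMaxOrder_of_denselyOrdered {α : Type*} [LinearOrder α] [DenselyOrdered α]
    (a : α) : NoMaxOrder (Iio a) :=
  (Order.IsSuccPrelimit.of_dense a).noMaxOrder_Iio

section BackAndForth

variable {I α β : Type*} [LinearOrder α] [LinearOrder β]

def ColoredPartialIso (cα : α → I) (cβ : β → I) : Type _ :=
  { f : Finset (α × β) //
    (∀ p ∈ f, ∀ q ∈ f, cmp p.1 q.1 = cmp p.2 q.2) ∧ ∀ p ∈ f, cα p.1 = cβ p.2 }

namespace ColoredPartialIso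

variable {cα : α → I} {cβ : β → I}

instance : Inhabited (ColoredPartialIso cα cβ) :=
  ⟨⟨∅, by simp only [Finset.notMem_empty, IsEmpty.forall_iff, implies_true, and_self]⟩⟩

instance : Preorder (ColoredPartialIso cα cβ) := Subtype.preorder _

protected def comm (f : ColoredPartialIso cα cβ) : ColoredPartialIso cβ cα :=
  ⟨f.val.image Prod.swap, by
    simp only [Finset.forall_mem_image, Prod.fst_swap, Prod.snd_swap]
    exact ⟨fun p hp q hq => (f.prop.1 p hp q hq).symm, fun p hp => (f.prop.2 p hp).symm⟩⟩

theorem mem_comm {f : ColoredPartialIso cα cβ} {p : β × α} : p ∈ f.comm.val ↔ p.swap ∈ f.val := by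
  simp [ColoredPartialIso.comm, Finset.mem_image, Prod.swap_eq_iff_eq_swap]

theorem comm_le_comm {f g : ColoredPartialIso cα cβ} (h : f ≤ g) : f.comm ≤ g.comm :=
  Finset.image_subset_image h

theorem comm_comm (f : ColoredPartialIso cα cβ) : f.comm.comm = f :=
  Subtype.ext (by simp [ColoredPartialIso.comm, Finset.image_image])

theorem exists_extension [NoMinOrder β] [NoMaxOrder β] [Nonempty β] (hβ : DenselyColored cβ)
    (f : ColoredPartialIso cα cβ) (a : α) : ∃ g, (∃ b, (a, b) ∈ g.val) ∧ f ≤ g := by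
  by_cases hdom : ∃ b, (a, b) ∈ f.val
  · exact ⟨f, hdom, le_rfl⟩
  push Not at hdom
  have lo_lt_hi : ∀ x ∈ (f.val.filter (·.1 < a)).image Prod.snd,
      ∀ y ∈ (f.val.filter (a < ·.1)).image Prod.snd, x < y := by
    simp only [Finset.forall_mem_image, Finset.mem_filter]
    rintro p ⟨hp, hpa⟩ q ⟨hq, haq⟩
    exact (lt_iff_lt_of_cmp_eq_cmp (f.prop.1 p hp q hq)).1 (hpa.trans haq)
  obtain ⟨b, hlo, hhi, hb⟩ := hβ.exists_between_finsets _ _ lo_lt_hi (cα a)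
  have hcmp : ∀ p ∈ f.val, cmp p.1 a = cmp p.2 b := by
    intro p hp
    rcases lt_or_gt_of_ne fun h : p.1 = a => hdom p.2 (h ▸ hp) with hpa | hap
    · rw [(cmp_eq_lt_iff _ _).2 hpa, (cmp_eq_lt_iff _ _).2 (hlo _ (Finset.mem_image_of_mem _
        (Finset.mem_filter.2 ⟨hp, hpa⟩)))]
    · rw [(cmp_eq_gt_iff _ _).2 hap, (cmp_eq_gt_iff _ _).2 (hhi _ (Finset.mem_image_of_mem _
        (Finset.mem_filter.2 ⟨hp, hap⟩)))]
  refine ⟨⟨insert (a, b) f.val, ?_, ?_⟩, ⟨b, Finset.mem_insert_self _ _⟩, Finset.subset_insert _ _⟩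
  · simp only [Finset.forall_mem_insert, cmp_self_eq_eq, true_and]
    exact ⟨fun q hq => by rw [cmp_eq_cmp_symm]; exact hcmp q hq,
      fun p hp => ⟨hcmp p hp, f.prop.1 p hp⟩⟩
  · simpa only [Finset.forall_mem_insert] using ⟨hb.symm, f.prop.2⟩

def definedAtLeft [NoMinOrder β] [NoMaxOrder β] [Nonempty β] (hβ : DenselyColored cβ) (a : α) :
    Order.Cofinal (ColoredPartialIso cα cβ) where
  carrier := {f | ∃ b, (a, b) ∈ f.val}
  isCofinal f := exists_extension hβ f a

def definedAtRight [NoMinOrder α] [NoMaxOrder α] [Nonempty α] (hα : DenselyColored cα) (b : β) :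
    Order.Cofinal (ColoredPartialIso cα cβ) where
  carrier := {f | ∃ a, (a, b) ∈ f.val}
  isCofinal f := by
    obtain ⟨g, ⟨a, hg⟩, hfg⟩ := exists_extension hα f.comm b
    refine ⟨g.comm, ⟨a, mem_comm.2 hg⟩, ?_⟩
    simpa only [comm_comm] using comm_le_comm hfg

end ColoredPartialIso

open ColoredPartialIso in
theorem DenselyColored.exists_orderIso {cα : α → I} {cβ : β → I} [Countable α] [Countable β]
    [NoMinOrder α] [NoMaxOrder α] [Nonempty α] [NoMinOrder β] [NoMaxOrder β] [Nonempty β]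
    (hα : DenselyColored cα) (hβ : DenselyColored cβ) : ∃ e : α ≃o β, ∀ a, cβ (e a) = cα a := by
  cases nonempty_encodable α
  cases nonempty_encodable β
  let D : α ⊕ β → Order.Cofinal (ColoredPartialIso cα cβ) :=
    Sum.elim (definedAtLeft hβ) (definedAtRight hα)
  let ideal := Order.idealOfCofinals default D
  have hF (a : α) : ∃ b, ∃ f ∈ ideal, (a, b) ∈ f.val := by
    obtain ⟨f, ⟨b, hb⟩, hf⟩ := Order.cofinal_meets_idealOfCofinals default D (Sum.inl a)
    exact ⟨b, f, hf, hb⟩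
  have hG (b : β) : ∃ a, ∃ f ∈ ideal, (a, b) ∈ f.val := by
    obtain ⟨f, ⟨a, ha⟩, hf⟩ := Order.cofinal_meets_idealOfCofinals default D (Sum.inr b)
    exact ⟨a, f, hf, ha⟩
  choose F hF using hF
  choose G hG using hG
  refine ⟨OrderIso.ofCmpEqCmp F G fun a b => ?_, fun a => ?_⟩
  · obtain ⟨f, hf, ha⟩ := hF a
    obtain ⟨g, hg, hb⟩ := hG b
    obtain ⟨h, -, hfh, hgh⟩ := ideal.directed _ hf _ hg
    exact h.prop.1 _ (hfh ha) _ (hgh hb)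
  · obtain ⟨f, -, ha⟩ := hF a
    exact (f.prop.2 _ ha).symm

end BackAndForth

namespace OrderIso

section SumLex

variable {α β : Type*} [LinearOrder α] [LinearOrder β]

noncomputable def sumLexIicInl (a : α) : Iic a ≃o Iic (toLex (Sum.inl a) : α ⊕ₗ β) :=
  StrictMono.orderIsoOfSurjective (fun x => ⟨toLex (Sum.inl x.1), Sum.Lex.inl_le_inl_iff.2 x.2⟩)
    (fun _ _ h => Sum.Lex.inl_lt_inl_iff.2 h) <| by
      rintro ⟨a' | b, hx⟩
      · exact ⟨⟨a', Sum.Lex.inl_le_inl_iff.1 hx⟩, rfl⟩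
      · exact absurd hx Sum.Lex.not_inr_le_inl

noncomputable def sumLexIicInr (b : β) : α ⊕ₗ Iic b ≃o Iic (toLex (Sum.inr b) : α ⊕ₗ β) :=
  StrictMono.orderIsoOfSurjective
    (fun x => Sum.elim (fun a => ⟨toLex (Sum.inl a), (Sum.Lex.inl_lt_inr a b).le⟩)
      (fun y => ⟨toLex (Sum.inr y.1), Sum.Lex.inr_le_inr_iff.2 y.2⟩) (ofLex x))
    (by
      rintro (a | y) (a' | y') h
      · exact Sum.Lex.inl_lt_inl_iff.2 (Sum.Lex.inl_lt_inl_iff.1 h)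
      · exact Sum.Lex.inl_lt_inr _ _
      · exact absurd h.le Sum.Lex.not_inr_le_inl
      · exact Sum.Lex.inr_lt_inr_iff.2 (show y < y' from Sum.Lex.inr_lt_inr_iff.1 h))
    (by
      rintro ⟨a | b', hx⟩
      · exact ⟨toLex (Sum.inl a), rfl⟩
      · exact ⟨toLex (Sum.inr ⟨b', Sum.Lex.inr_le_inr_iff.1 hx⟩), rfl⟩)

end SumLex

section SigmaLex

variable {ι κ : Type*} [LinearOrder ι] [LinearOrder κ]

noncomputable def sigmaLexCongrLeft (e : ι ≃o κ) (β : κ → Type*) [∀ k, LinearOrder (β k)] :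
    (Σₗ i, β (e i)) ≃o Σₗ k, β k :=
  StrictMono.orderIsoOfSurjective (fun x => toLex ⟨e (ofLex x).1, (ofLex x).2⟩)
    (by
      rintro ⟨i, x⟩ ⟨j, y⟩ (⟨_, _, hij⟩ | ⟨_, _, hxy⟩)
      · exact Sigma.Lex.left _ _ (e.strictMono hij)
      · exact Sigma.Lex.right _ _ hxy)
    (by
      rintro ⟨k, y⟩
      obtain ⟨i, rfl⟩ := e.surjective k
      exact ⟨toLex ⟨i, y⟩, rfl⟩)

noncomputable def sigmaLexIic {β : ι → Type*} [∀ i, LinearOrder (β i)] (i : ι) (b : β i) :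
    (Σₗ j : Iio i, β j) ⊕ₗ Iic b ≃o Iic (toLex ⟨i, b⟩ : Σₗ i, β i) :=
  StrictMono.orderIsoOfSurjective
    (fun x => Sum.elim
      (fun y => ⟨toLex ⟨(ofLex y).1, (ofLex y).2⟩, Sigma.Lex.left _ _ (ofLex y).1.2⟩)
      (fun y => ⟨toLex ⟨i, y.1⟩, Sigma.Lex.right _ _ y.2⟩) (ofLex x))
    (by
      rintro (⟨j, x⟩ | y) (⟨j', x'⟩ | y') h
      · rcases Sum.Lex.inl_lt_inl_iff.1 h with ⟨_, _, hjj'⟩ | ⟨_, _, hxx'⟩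
        · exact Sigma.Lex.left _ _ hjj'
        · exact Sigma.Lex.right _ _ hxx'
      · exact Sigma.Lex.left _ _ j.2
      · exact absurd h.le Sum.Lex.not_inr_le_inl
      · exact Sigma.Lex.right _ _ (show y < y' from Sum.Lex.inr_lt_inr_iff.1 h))
    (by
      rintro ⟨⟨j, x⟩, ⟨_, _, hji⟩ | ⟨_, _, hxb⟩⟩
      · exact ⟨toLex (Sum.inl (toLex ⟨⟨j, hji⟩, x⟩)), rfl⟩
      · exact ⟨toLex (Sum.inr ⟨x, hxb⟩), rfl⟩)

end SigmaLex

end OrderIso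

namespace DenselyColored

variable {I α β : Type*} [LinearOrder α] [LinearOrder β] {cα : α → I} {cβ : β → I}
  [Countable α] [NoMinOrder α] [NoMaxOrder α] [Nonempty α]
  [Countable β] [NoMinOrder β] [NoMaxOrder β] [Nonempty β]

theorem nonempty_sigmaLex_orderIso (Y : I → Type*) [∀ i, LinearOrder (Y i)]
    (hα : DenselyColored cα) (hβ : DenselyColored cβ) :
    Nonempty ((Σₗ a, Y (cα a)) ≃o Σₗ b, Y (cβ b)) := by
  obtain ⟨e, he⟩ := hα.exists_orderIso hβ
  obtain rfl : cα = fun a => cβ (e a) := funext fun a => (he a).symm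
  exact ⟨OrderIso.sigmaLexCongrLeft e fun b => Y (cβ b)⟩

theorem nonempty_sumLex_orderIso (Y : I → Type*) [∀ i, LinearOrder (Y i)]
    (hα : DenselyColored cα) (hβ : DenselyColored cβ) {A B : Type*} [LinearOrder A] [LinearOrder B]
    (hAB : Nonempty (A ≃o B)) : Nonempty ((Σₗ a, Y (cα a)) ⊕ₗ A ≃o (Σₗ b, Y (cβ b)) ⊕ₗ B) :=
  let ⟨e⟩ := hα.nonempty_sigmaLex_orderIso Y hβ
  let ⟨g⟩ := hAB
  ⟨e.sumLexCongr g⟩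

end DenselyColored

/-- If `Q` is a countable dense-coloured linear order without endpoints with colours
in `I`, `(Y i)` is a family of linear orders and `Z` a linear order such that `Z` and
all the `Y i` are pairwise lower isomorphic, then `(Σₗ (q : Q), Y (c q)) ⊕ₗ Z`
(the order ℚ_n(Y₀, …) + Z of the paper) is lower 1-transitive. -/
theorem lowerOneTransitive_ratMixture_add
    {Q : Type*} [LinearOrder Q] [Countable Q] [NoMinOrder Q] [NoMaxOrder Q]
    {I : Type*} [Nonempty I] (c : Q → I)
    (hc : ∀ q q' : Q, q < q' → ∀ i : I, ∃ r : Q, q < r ∧ r < q' ∧ c r = i)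
    (Y : I → Type*) [∀ i, LinearOrder (Y i)]
    (Z : Type*) [LinearOrder Z]
    (hYY : ∀ i j : I, LowerIsomorphic (Y i) (Y j))
    (hYZ : ∀ i : I, LowerIsomorphic (Y i) Z)
    (hZY : ∀ i : I, LowerIsomorphic Z (Y i))
    (hZZ : LowerIsomorphic Z Z) :
    LowerOneTransitive ((Σₗ (q : Q), Y (c q)) ⊕ₗ Z) := by
  have hc : DenselyColored c := hc
  have := hc.denselyOrdered
  let iicInl (q : Q) (y : Y (c q)) :
      Iic (toLex (Sum.inl (toLex ⟨q, y⟩)) : (Σₗ q, Y (c q)) ⊕ₗ Z) ≃o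
        (Σₗ s : Iio q, Y (c s)) ⊕ₗ Iic y :=
    ((OrderIso.sigmaLexIic (β := fun q => Y (c q)) q y).trans (OrderIso.sumLexIicInl _)).symm
  let iicInr (z : Z) := (OrderIso.sumLexIicInr (α := Σₗ q, Y (c q)) z).symm
  rintro (⟨q, y⟩ | z) (⟨q', y'⟩ | z')
  · obtain ⟨e⟩ := (hc.Iio q).nonempty_sumLex_orderIso Y (hc.Iio q') (hYY _ _ y y')
    exact ⟨(iicInl q y).trans (e.trans (iicInl q' y').symm)⟩
  · have : Nonempty Q := ⟨q⟩
    obtain ⟨e⟩ := (hc.Iio q).nonempty_sumLex_orderIso Y hc (hYZ _ y z')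
    exact ⟨(iicInl q y).trans (e.trans (iicInr z').symm)⟩
  · have : Nonempty Q := ⟨q'⟩
    obtain ⟨e⟩ := hc.nonempty_sumLex_orderIso Y (hc.Iio q') (hZY _ z y')
    exact ⟨(iicInr z).trans (e.trans (iicInl q' y').symm)⟩
  · obtain ⟨g⟩ := hZZ z z'
    exact ⟨(iicInr z).trans (((OrderIso.refl _).sumLexCongr g).trans (iicInr z').symm)⟩
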